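/- arXiv:2605.18814 — 2 statements merged into one kernel-verified Lean document; each statement's English description precedes it below -/
import Mathlib

section
/- Fix p, T ∈ ℕ, t* < T − 1, β₁, β₂ ∈ [0,1), λ ∈ ℝ, c ≥ 0, learning rates η_t ∈ ℝ for t* ≤ t < T, vectors θ_{t*}, m_{t*−1}, v_{t*−1}, g*, and for each t with t*+1 ≤ t < T a map G_t : ℝ^p → ℝ^p. Define the perturbed AdamW trajectory: g_{t*}(ε) = G_{t*}(θ_{t*}) − ε g* for a fixed map G_{t*}, and for t ≥ t*+1, g_t(ε) = G_t(θ_t(ε)); m_t(ε) = β₁ m_{t−1}(ε) + (1−β₁) g_t(ε) and v_t(ε) = β₂ v_{t−1}(ε) + (1−β₂) g_t(ε) ⊙ g_t(ε) for all t ≥ t* (with m_{t*−1}, v_{t*−1} independent of ε); and θ_{t+1}(ε)_i = (1−η_t λ) θ_t(ε)_i − η_t m̂_t(ε)_i / (√(v̂_t(ε)_i) + c), where m̂_t = m_t/(1−β₁^{t+1}) and v̂_t = v_t/(1−β₂^{t+1}). Assume each G_t (t*+1 ≤ t < T) is differentiable at θ_t(0) with Jacobian H_t, each map ε ↦ θ_t(ε),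 m_t(ε), v_t(ε) is differentiable at 0, and v̂_t(0)_i > 0 for every t* ≤ t < T and every coordinate i. Let A_t = M_t + R_t H_t P for t*+1 ≤ t < T with P = [I_p, 0, 0] and M_t, R_t the block matrices built from η_t, λ, β₁, β₂, the diagonal matrices D_t = diag(1/(√(v̂_t(0)_i)+c)) and S_t = diag(m̂_t(0)_i/(2√(v̂_t(0)_i)(√(v̂_t(0)_i)+c)²)), and g_t(0), namely: M_t has block rows ( (1−η_tλ)I, −(η_tβ₁/(1−β₁^{t+1}))D_t, (η_tβ₂/(1−β₂^{t+1}))S_t ), ( 0, β₁I, 0 ), ( 0, 0, β₂I ), and R_t has block rows ( −(η_t(1−β₁)/(1−β₁^{t+1}))D_t + (2η_t(1−β₂)/(1−β₂^{t+1}))S_t diag(g_t(0)), (1−β₁)I, 2(1−β₂)diag(g_t(0)) ). Let Z_push ∈ ℝ^{3p} be the stacked vector (θ̇_{t*+1}, ṁ_{t*}, v̇_{t*}) of derivatives at ε = 0, where ṁ_{t*} = −(1−β₁) g*, v̇_{t*} = −2(1−β₂) g_{t*}(0) ⊙ g*, and θ̇_{t*+1} is the derivative of ε ↦ θ_{t*+1}(ε)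 at 0. Then the derivative of ε ↦ θ_T(ε) at 0 equals P · A_{T−1} A_{T−2} ⋯ A_{t*+1} · Z_push. -/
noncomputable section

/-- Stack three vectors in `ℝ^p` into a vector in `ℝ^{3p}`. -/
def stack3 (p : ℕ) (x y z : Fin p → ℝ) : (Fin p ⊕ (Fin p ⊕ Fin p)) → ℝ :=
  Sum.elim x (Sum.elim y z)

/-- The projection `P = [I_p, 0, 0] ∈ ℝ^{p×3p}` onto the first `p` coordinates. -/
def Pmat (p : ℕ) : Matrix (Fin p) (Fin p ⊕ (Fin p ⊕ Fin p)) ℝ :=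
  Matrix.fromCols 1 0

/-- The backward product `A_{T-1} A_{T-2} ⋯ A_t` (empty product = identity). -/
def backProd {n : Type*} [Fintype n] [DecidableEq n]
    (A : ℕ → Matrix n n ℝ) (t T : ℕ) : Matrix n n ℝ :=
  (((List.range (T - t)).map fun k => A (T - 1 - k)).prod)

set_option maxHeartbeats 1000000

/-- **AdamW-influence (formal version).**
For a model trained with AdamW (decays `β₁, β₂`, bias correction, weight decay `λ`,
smoothing `c`), the derivative at `ε = 0` of the final parameters `θ_T(ε)` of the
trajectory perturbed by `g_{t*}(ε) = g_{t*} − ε g*` at step `t*` equals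
`P · A_{T−1} ⋯ A_{t*+1} · Z_push` with `A_t = M_t + R_t H_t P` and
`Z_push = (θ̇_{t*+1}, ṁ_{t*}, v̇_{t*})`. -/
theorem stmt_6 (p T tstar : ℕ) (htT : tstar + 1 < T)
    (β₁ β₂ : ℝ) (hβ₁ : β₁ ∈ Set.Ico (0 : ℝ) 1) (hβ₂ : β₂ ∈ Set.Ico (0 : ℝ) 1)
    (lam c : ℝ) (hc : 0 ≤ c) (η : ℕ → ℝ)
    (θinit mprev vprev gstar : Fin p → ℝ)
    (G : ℕ → (Fin p → ℝ) → Fin p → ℝ)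
    (θ m v g : ℕ → ℝ → Fin p → ℝ)
    -- the perturbed AdamW trajectory
    (hθinit : ∀ ε : ℝ, θ tstar ε = θinit)
    (hgstar : ∀ ε : ℝ, g tstar ε = G tstar θinit - ε • gstar)
    (hg : ∀ t, tstar + 1 ≤ t → t < T → ∀ ε : ℝ, g t ε = G t (θ t ε))
    (hminit : ∀ ε : ℝ, m tstar ε = β₁ • mprev + (1 - β₁) • g tstar ε)
    (hvinit : ∀ ε : ℝ, v tstar ε = β₂ • vprev + (1 - β₂) • (g tstar ε * g tstar ε))
    (hm : ∀ t, tstar + 1 ≤ t → t < T → ∀ ε : ℝ,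
      m t ε = β₁ • m (t - 1) ε + (1 - β₁) • g t ε)
    (hv : ∀ t, tstar + 1 ≤ t → t < T → ∀ ε : ℝ,
      v t ε = β₂ • v (t - 1) ε + (1 - β₂) • (g t ε * g t ε))
    (hθ : ∀ t, tstar ≤ t → t < T → ∀ ε : ℝ, θ (t + 1) ε = fun i =>
      (1 - η t * lam) * θ t ε i
        - η t * (m t ε i / (1 - β₁ ^ (t + 1)))
            / (Real.sqrt (v t ε i / (1 - β₂ ^ (t + 1))) + c))
    -- differentiability assumptions
    (H : ℕ → Matrix (Fin p) (Fin p) ℝ)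
    (hG : ∀ t, tstar + 1 ≤ t → t < T →
      HasFDerivAt (G t) (Matrix.mulVecLin (H t)).toContinuousLinearMap (θ t 0))
    (hθdiff : ∀ t, tstar ≤ t → t ≤ T → DifferentiableAt ℝ (fun ε => θ t ε) 0)
    (hmdiff : ∀ t, tstar ≤ t → t < T → DifferentiableAt ℝ (fun ε => m t ε) 0)
    (hvdiff : ∀ t, tstar ≤ t → t < T → DifferentiableAt ℝ (fun ε => v t ε) 0)
    (hvpos : ∀ t, tstar ≤ t → t < T → ∀ i, 0 < v t 0 i / (1 - β₂ ^ (t + 1)))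
    -- the transition matrices A_t = M_t + R_t H_t P
    (D S : ℕ → Matrix (Fin p) (Fin p) ℝ)
    (hD : ∀ t, D t = Matrix.diagonal fun i =>
      1 / (Real.sqrt (v t 0 i / (1 - β₂ ^ (t + 1))) + c))
    (hS : ∀ t, S t = Matrix.diagonal fun i =>
      (m t 0 i / (1 - β₁ ^ (t + 1)))
        / (2 * Real.sqrt (v t 0 i / (1 - β₂ ^ (t + 1)))
            * (Real.sqrt (v t 0 i / (1 - β₂ ^ (t + 1))) + c) ^ 2))
    (M : ℕ → Matrix (Fin p ⊕ (Fin p ⊕ Fin p)) (Fin p ⊕ (Fin p ⊕ Fin p)) ℝ)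
    (hM : ∀ t, M t = Matrix.fromBlocks
      ((1 - η t * lam) • (1 : Matrix (Fin p) (Fin p) ℝ))
      (Matrix.fromCols ((-(η t * β₁ / (1 - β₁ ^ (t + 1)))) • D t)
        ((η t * β₂ / (1 - β₂ ^ (t + 1))) • S t))
      0
      (Matrix.fromBlocks (β₁ • 1) 0 0 (β₂ • 1)))
    (R : ℕ → Matrix (Fin p ⊕ (Fin p ⊕ Fin p)) (Fin p) ℝ)
    (hR : ∀ t, R t = Matrix.fromRows
      ((-(η t * (1 - β₁) / (1 - β₁ ^ (t + 1)))) • D t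
        + (2 * η t * (1 - β₂) / (1 - β₂ ^ (t + 1))) • (S t * Matrix.diagonal (g t 0)))
      (Matrix.fromRows ((1 - β₁) • 1) ((2 * (1 - β₂)) • Matrix.diagonal (g t 0))))
    (A : ℕ → Matrix (Fin p ⊕ (Fin p ⊕ Fin p)) (Fin p ⊕ (Fin p ⊕ Fin p)) ℝ)
    (hA : ∀ t, A t = M t + R t * H t * Pmat p)
    -- the initial augmented perturbation
    (Zpush : (Fin p ⊕ (Fin p ⊕ Fin p)) → ℝ)
    (hZpush : Zpush = stack3 p
      (deriv (fun ε => θ (tstar + 1) ε) 0)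
      ((-(1 - β₁)) • gstar)
      ((-(2 * (1 - β₂))) • (g tstar 0 * gstar))) :
    deriv (fun ε => θ T ε) 0 =
      (Pmat p * backProd A (tstar + 1) T).mulVec Zpush := by
  obtain ⟨hβ₁0, hβ₁1⟩ := hβ₁
  obtain ⟨hβ₂0, hβ₂1⟩ := hβ₂
  have hbc1 : ∀ t : ℕ, (0:ℝ) < 1 - β₁ ^ (t+1) := fun t => by
    have : β₁ ^ (t+1) < 1 := pow_lt_one₀ hβ₁0 hβ₁1 (by omega)
    linarith
  have hbc2 : ∀ t : ℕ, (0:ℝ) < 1 - β₂ ^ (t+1) := fun t => by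
    have : β₂ ^ (t+1) < 1 := pow_lt_one₀ hβ₂0 hβ₂1 (by omega)
    linarith
  -- projection lemma
  have hPZ : ∀ x y z : Fin p → ℝ, (Pmat p).mulVec (stack3 p x y z) = x := by
    intro x y z
    simp [Pmat, stack3, Matrix.fromCols_mulVec_sumElim]
  -- base case derivatives
  have hmd0 : ∀ i, deriv (fun ε => m tstar ε) 0 i = -((1 - β₁) * gstar i) := by
    intro i
    have hfun : (fun ε => m tstar ε i)
        = fun ε : ℝ => β₁ * mprev i + (1 - β₁) * (G tstar θinit i - ε * gstar i) := by
      funext ε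
      have h1 := congrFun (hminit ε) i
      have h2 := congrFun (hgstar ε) i
      simp only [Pi.add_apply, Pi.smul_apply, smul_eq_mul, Pi.sub_apply] at h1 h2
      rw [h1, h2]
    have hder : HasDerivAt (fun ε => m tstar ε i) ((1 - β₁) * -(gstar i)) 0 := by
      rw [hfun]
      exact (((hasDerivAt_mul_const (gstar i)).const_sub (G tstar θinit i)).const_mul
        (1 - β₁)).const_add (β₁ * mprev i)
    have huniq := (hasDerivAt_pi.1 (hmdiff tstar le_rfl (by omega)).hasDerivAt i).unique hder
    rw [huniq]; ring
  have hvd0 : ∀ i, deriv (fun ε => v tstar ε) 0 i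
      = -(2 * (1 - β₂)) * (g tstar 0 i * gstar i) := by
    intro i
    have hgfun : ∀ ε : ℝ, g tstar ε i = G tstar θinit i - ε * gstar i := by
      intro ε
      have := congrFun (hgstar ε) i
      simpa using this
    have hfun : (fun ε => v tstar ε i)
        = fun ε : ℝ => β₂ * vprev i
            + (1 - β₂) * ((G tstar θinit i - ε * gstar i) * (G tstar θinit i - ε * gstar i)) := by
      funext ε
      have h1 := congrFun (hvinit ε) i
      simp only [Pi.add_apply, Pi.smul_apply, smul_eq_mul, Pi.mul_apply] at h1
      rw [h1, hgfun ε]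
    have hlin : HasDerivAt (fun ε : ℝ => G tstar θinit i - ε * gstar i) (-(gstar i)) 0 :=
      (hasDerivAt_mul_const (gstar i)).const_sub (G tstar θinit i)
    have hder : HasDerivAt (fun ε => v tstar ε i)
        ((1 - β₂) * (-(gstar i) * (G tstar θinit i - 0 * gstar i)
          + (G tstar θinit i - 0 * gstar i) * -(gstar i))) 0 := by
      rw [hfun]
      exact ((hlin.mul hlin).const_mul (1 - β₂)).const_add (β₂ * vprev i)
    have huniq := (hasDerivAt_pi.1 (hvdiff tstar le_rfl (by omega)).hasDerivAt i).unique hder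
    rw [huniq, hgfun 0]; ring
  have base : stack3 p (deriv (fun ε => θ (tstar+1) ε) 0) (deriv (fun ε => m tstar ε) 0)
      (deriv (fun ε => v tstar ε) 0) = Zpush := by
    rw [hZpush]
    funext j
    rcases j with i | i | i
    · rfl
    · simp only [stack3, Sum.elim_inr, Sum.elim_inl, Pi.smul_apply, smul_eq_mul]
      rw [hmd0 i]; ring
    · simp only [stack3, Sum.elim_inr, Pi.smul_apply, Pi.mul_apply, smul_eq_mul]
      rw [hvd0 i]
  -- key propagation step
  have key : ∀ t, tstar + 1 ≤ t → t < T →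
      stack3 p (deriv (fun ε => θ (t+1) ε) 0) (deriv (fun ε => m t ε) 0)
          (deriv (fun ε => v t ε) 0)
        = (A t).mulVec (stack3 p (deriv (fun ε => θ t ε) 0)
            (deriv (fun ε => m (t-1) ε) 0) (deriv (fun ε => v (t-1) ε) 0)) := by
    intro t ht1 ht2
    have htstar : tstar ≤ t := by omega
    have hprev1 : tstar ≤ t - 1 := by omega
    have hprev2 : t - 1 < T := by omega
    set x : Fin p → ℝ := deriv (fun ε => θ t ε) 0 with hx
    set y : Fin p → ℝ := deriv (fun ε => m (t-1) ε) 0 with hy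
    set z : Fin p → ℝ := deriv (fun ε => v (t-1) ε) 0 with hz
    have hθt : HasDerivAt (fun ε => θ t ε) x 0 :=
      (hθdiff t htstar (le_of_lt ht2)).hasDerivAt
    -- derivative of g t
    have hgd : HasDerivAt (fun ε => g t ε) ((H t).mulVec x) 0 := by
      have hcomp := (hG t ht1 ht2).comp_hasDerivAt 0 hθt
      have hfun : (fun ε => g t ε) = fun ε => G t (θ t ε) := funext fun ε => hg t ht1 ht2 ε
      rw [hfun]
      exact hcomp
    set gd : Fin p → ℝ := (H t).mulVec x with hgdDef
    have hgI : ∀ i, HasDerivAt (fun ε => g t ε i) (gd i) 0 := fun i =>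
      hasDerivAt_pi.1 hgd i
    have hmtI : ∀ i, HasDerivAt (fun ε => m t ε i) (β₁ * y i + (1 - β₁) * gd i) 0 := by
      intro i
      have hfun : (fun ε => m t ε i)
          = fun ε => β₁ * m (t-1) ε i + (1 - β₁) * g t ε i := by
        funext ε
        have := congrFun (hm t ht1 ht2 ε) i
        simpa using this
      rw [hfun]
      exact ((hasDerivAt_pi.1 (hmdiff (t-1) hprev1 hprev2).hasDerivAt i).const_mul β₁).add
        ((hgI i).const_mul (1 - β₁))
    have hvtI : ∀ i, HasDerivAt (fun ε => v t ε i)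
        (β₂ * z i + (1 - β₂) * (gd i * g t 0 i + g t 0 i * gd i)) 0 := by
      intro i
      have hfun : (fun ε => v t ε i)
          = fun ε => β₂ * v (t-1) ε i + (1 - β₂) * (g t ε i * g t ε i) := by
        funext ε
        have := congrFun (hv t ht1 ht2 ε) i
        simpa using this
      rw [hfun]
      exact ((hasDerivAt_pi.1 (hvdiff (t-1) hprev1 hprev2).hasDerivAt i).const_mul β₂).add
        (((hgI i).mul (hgI i)).const_mul (1 - β₂))
    have hmdt : ∀ i, deriv (fun ε => m t ε) 0 i = β₁ * y i + (1 - β₁) * gd i := fun i =>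
      (hasDerivAt_pi.1 (hmdiff t htstar ht2).hasDerivAt i).unique (hmtI i)
    have hvdt : ∀ i, deriv (fun ε => v t ε) 0 i
        = β₂ * z i + (1 - β₂) * (gd i * g t 0 i + g t 0 i * gd i) := fun i =>
      (hasDerivAt_pi.1 (hvdiff t htstar ht2).hasDerivAt i).unique (hvtI i)
    -- derivative of θ (t+1), coordinatewise
    have hθnext : ∀ i, deriv (fun ε => θ (t+1) ε) 0 i =
        (1 - η t * lam) * x i
          - η t * ((deriv (fun ε => m t ε) 0 i / (1 - β₁ ^ (t+1)))
                * (Real.sqrt (v t 0 i / (1 - β₂ ^ (t+1))) + c)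
              - (m t 0 i / (1 - β₁ ^ (t+1)))
                * ((deriv (fun ε => v t ε) 0 i / (1 - β₂ ^ (t+1)))
                    / (2 * Real.sqrt (v t 0 i / (1 - β₂ ^ (t+1))))))
            / (Real.sqrt (v t 0 i / (1 - β₂ ^ (t+1))) + c) ^ 2 := by
      intro i
      have hw : 0 < v t 0 i / (1 - β₂ ^ (t+1)) := hvpos t htstar ht2 i
      have hsq : 0 < Real.sqrt (v t 0 i / (1 - β₂ ^ (t+1))) := Real.sqrt_pos.2 hw
      have hden : Real.sqrt (v t 0 i / (1 - β₂ ^ (t+1))) + c ≠ 0 := by positivity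
      have hθi : HasDerivAt (fun ε => θ t ε i) (x i) 0 := hasDerivAt_pi.1 hθt i
      have hnum : HasDerivAt (fun ε => m t ε i / (1 - β₁ ^ (t+1)))
          (deriv (fun ε => m t ε) 0 i / (1 - β₁ ^ (t+1))) 0 :=
        (hasDerivAt_pi.1 (hmdiff t htstar ht2).hasDerivAt i).div_const _
      have hsqrt : HasDerivAt (fun ε => Real.sqrt (v t ε i / (1 - β₂ ^ (t+1))) + c)
          ((deriv (fun ε => v t ε) 0 i / (1 - β₂ ^ (t+1)))
            / (2 * Real.sqrt (v t 0 i / (1 - β₂ ^ (t+1))))) 0 := by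
        have h1 : HasDerivAt (fun ε => v t ε i / (1 - β₂ ^ (t+1)))
            (deriv (fun ε => v t ε) 0 i / (1 - β₂ ^ (t+1))) 0 :=
          (hasDerivAt_pi.1 (hvdiff t htstar ht2).hasDerivAt i).div_const _
        exact (h1.sqrt (ne_of_gt hw)).add_const c
      have hq := hnum.div hsqrt hden
      have hfull := (hθi.const_mul (1 - η t * lam)).sub (hq.const_mul (η t))
      have hfun : (fun ε => θ (t+1) ε i)
          = fun ε => (1 - η t * lam) * θ t ε i
              - η t * ((m t ε i / (1 - β₁ ^ (t+1)))
                / (Real.sqrt (v t ε i / (1 - β₂ ^ (t+1))) + c)) := by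
        funext ε
        have := congrFun (hθ t htstar ht2 ε) i
        rw [this, mul_div_assoc]
      replace hfull : HasDerivAt (fun ε => θ (t+1) ε i) _ 0 :=
        hfull.congr_of_eventuallyEq (Filter.Eventually.of_forall fun ε => congrFun hfun ε)
      have huniq := (hasDerivAt_pi.1 (hθdiff (t+1) (by omega) ht2).hasDerivAt i).unique hfull
      rw [huniq]
      ring
    -- matrix computation
    have hMv : (M t).mulVec (stack3 p x y z)
        = stack3 p ((1 - η t * lam) • x
            + ((-(η t * β₁ / (1 - β₁ ^ (t+1)))) • (D t).mulVec y
              + (η t * β₂ / (1 - β₂ ^ (t+1))) • (S t).mulVec z))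
          (β₁ • y) (β₂ • z) := by
      rw [hM t]
      funext j
      rcases j with i | i | i <;>
        simp [stack3, Matrix.fromBlocks_mulVec, Sum.elim_comp_inl, Sum.elim_comp_inr,
          Matrix.fromCols_mulVec_sumElim, Matrix.smul_mulVec,
          Matrix.one_mulVec, Matrix.zero_mulVec, Matrix.add_mulVec,
          Matrix.neg_mulVec, Pi.neg_apply]
    have hRv : (R t).mulVec gd
        = stack3 p ((-(η t * (1 - β₁) / (1 - β₁ ^ (t+1)))) • (D t).mulVec gd
            + (2 * η t * (1 - β₂) / (1 - β₂ ^ (t+1)))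
                • (S t).mulVec ((Matrix.diagonal (g t 0)).mulVec gd))
          ((1 - β₁) • gd) ((2 * (1 - β₂)) • (Matrix.diagonal (g t 0)).mulVec gd) := by
      rw [hR t]
      funext j
      rcases j with i | i | i <;>
        simp [stack3, Matrix.fromRows_mulVec, Matrix.add_mulVec,
          Matrix.smul_mulVec, Matrix.one_mulVec, ← Matrix.mulVec_mulVec,
          Matrix.neg_mulVec, Pi.neg_apply]
    have hmulrw : (A t).mulVec (stack3 p x y z)
        = (M t).mulVec (stack3 p x y z) + (R t).mulVec gd := by
      rw [hA t, Matrix.add_mulVec, ← Matrix.mulVec_mulVec, ← Matrix.mulVec_mulVec, hPZ]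
    rw [hmulrw, hMv, hRv]
    funext j
    rcases j with i | i | i
    · have hw : 0 < v t 0 i / (1 - β₂ ^ (t+1)) := hvpos t htstar ht2 i
      have hsq : 0 < Real.sqrt (v t 0 i / (1 - β₂ ^ (t+1))) := Real.sqrt_pos.2 hw
      have hden : (0:ℝ) < Real.sqrt (v t 0 i / (1 - β₂ ^ (t+1))) + c := by positivity
      have hb1 := hbc1 t
      have hb2 := hbc2 t
      simp only [stack3, Sum.elim_inl, Pi.add_apply, Pi.smul_apply, smul_eq_mul,
        hD t, hS t, Matrix.mulVec_diagonal]
      rw [hθnext i, hmdt i, hvdt i]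
      set b1 : ℝ := 1 - β₁ ^ (t+1) with hb1e
      set b2 : ℝ := 1 - β₂ ^ (t+1) with hb2e
      set sq : ℝ := Real.sqrt (v t 0 i / b2) with hsqe
      have hsq' : sq ≠ 0 := ne_of_gt hsq
      have hden' : sq + c ≠ 0 := ne_of_gt hden
      have hb1' : b1 ≠ 0 := ne_of_gt hb1
      have hb2' : b2 ≠ 0 := ne_of_gt hb2
      field_simp
      ring
    · simp only [stack3, Sum.elim_inr, Sum.elim_inl, Pi.add_apply, Pi.smul_apply,
        smul_eq_mul]
      rw [hmdt i]
    · simp only [stack3, Sum.elim_inr, Pi.add_apply, Pi.smul_apply, smul_eq_mul,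
        Matrix.mulVec_diagonal]
      rw [hvdt i]
      ring
  -- backward product recursion
  have hback : ∀ t, tstar + 1 ≤ t →
      backProd A (tstar+1) (t+1) = A t * backProd A (tstar+1) t := by
    intro t ht
    unfold backProd
    have h1 : t + 1 - (tstar+1) = (t - (tstar+1)) + 1 := by omega
    rw [h1, List.range_succ_eq_map, List.map_cons, List.prod_cons, List.map_map]
    congr 1
    have hfg : ((fun k => A (t + 1 - 1 - k)) ∘ Nat.succ) = fun k => A (t - 1 - k) := by
      funext k
      simp only [Function.comp_apply]
      have h2 : t + 1 - 1 - Nat.succ k = t - 1 - k := by omega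
      rw [h2]
    rw [hfg]
  -- main induction
  have main : ∀ t (ht : tstar + 1 ≤ t), t ≤ T →
      stack3 p (deriv (fun ε => θ t ε) 0) (deriv (fun ε => m (t-1) ε) 0)
          (deriv (fun ε => v (t-1) ε) 0)
        = (backProd A (tstar+1) t).mulVec Zpush := by
    intro t ht
    induction t, ht using Nat.le_induction with
    | base =>
      intro _
      have h0 : backProd A (tstar+1) (tstar+1) = 1 := by
        unfold backProd; simp
      rw [h0, Matrix.one_mulVec]
      simpa using base
    | succ n hn ih =>
      intro hnT
      have hnT' : n < T := by omega
      rw [hback n hn, ← Matrix.mulVec_mulVec, ← ih (by omega)]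
      have h1 : n + 1 - 1 = n := by omega
      rw [h1, ← key n hn hnT']
  -- conclusion
  rw [← Matrix.mulVec_mulVec, ← main T (by omega) le_rfl, hPZ]

end
end

section
/- Fix p, T ∈ ℕ with t* < T − 1, learning rates η_t ∈ ℝ for t* ≤ t < T, vectors θ_{t*}, g, g* ∈ ℝ^p, and for each t with t*+1 ≤ t < T a map G_t : ℝ^p → ℝ^p. Define the perturbed SGD trajectory θ_{t*+1}(ε) = θ_{t*} − η_{t*}(g − ε g*) and θ_{t+1}(ε) = θ_t(ε) − η_t G_t(θ_t(ε)) for t*+1 ≤ t < T. Assume each G_t is differentiable at θ_t(0) with Jacobian H_t ∈ ℝ^{p×p}, and let L : ℝ^p → ℝ be differentiable at θ_T(0) with gradient ∇L(θ_T(0)). Then ε ↦ L(θ_T(ε)) is differentiable at 0 and its derivative equals η_{t*} · ⟨ ∇L(θ_T(0)), (I − η_{T−1} H_{T−1})(I − η_{T−2} H_{T−2}) ⋯ (I − η_{t*+1} H_{t*+1}) g* ⟩. -/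
noncomputable section

lemma backProd_self {n : Type*} [Fintype n] [DecidableEq n]
    (A : ℕ → Matrix n n ℝ) (t : ℕ) : backProd A t t = 1 := by
  simp [backProd]

lemma backProd_succ {n : Type*} [Fintype n] [DecidableEq n]
    (A : ℕ → Matrix n n ℝ) (s T : ℕ) (h : s ≤ T) :
    backProd A s (T + 1) = A T * backProd A s T := by
  unfold backProd
  have h1 : T + 1 - s = (T - s) + 1 := by omega
  rw [h1, List.range_succ_eq_map, List.map_cons, List.prod_cons, List.map_map]
  have e0 : T + 1 - 1 - 0 = T := by omega
  rw [e0]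
  have hf : ((fun k => A (T + 1 - 1 - k)) ∘ Nat.succ) = fun k => A (T - 1 - k) := by
    funext k
    simp only [Function.comp_apply]
    have : T + 1 - 1 - k.succ = T - 1 - k := by omega
    rw [this]
  rw [hf]

/-- **Exact first-order content of the SGD-influence formula.**
Perturbing the SGD update at step `t*` by removing an `ε`-fraction of a per-sample
gradient `g*`, the derivative at `ε = 0` of the validation loss `L` at the final
parameters is
`η_{t*} ⟨∇L(θ_T(0)), (I − η_{T−1}H_{T−1}) ⋯ (I − η_{t*+1}H_{t*+1}) g*⟩`. -/
theorem stmt_9 (p T tstar : ℕ) (htT : tstar + 1 < T) (η : ℕ → ℝ)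
    (θinit g gstar : Fin p → ℝ)
    (G : ℕ → (Fin p → ℝ) → Fin p → ℝ)
    (θ : ℕ → ℝ → Fin p → ℝ)
    (hθ0 : ∀ ε : ℝ, θ (tstar + 1) ε = θinit - η tstar • (g - ε • gstar))
    (hθ : ∀ t, tstar + 1 ≤ t → t < T → ∀ ε : ℝ,
      θ (t + 1) ε = θ t ε - η t • G t (θ t ε))
    (H : ℕ → Matrix (Fin p) (Fin p) ℝ)
    (hG : ∀ t, tstar + 1 ≤ t → t < T →
      HasFDerivAt (G t) (Matrix.mulVecLin (H t)).toContinuousLinearMap (θ t 0))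
    (L : (Fin p → ℝ) → ℝ) (gradL : Fin p → ℝ)
    (hL : HasFDerivAt L
      (∑ i, gradL i • (ContinuousLinearMap.proj i : (Fin p → ℝ) →L[ℝ] ℝ)) (θ T 0)) :
    HasDerivAt (fun ε => L (θ T ε))
      (η tstar * ∑ i, gradL i *
        (backProd (fun t => 1 - η t • H t) (tstar + 1) T).mulVec gstar i) 0 := by
  set A : ℕ → Matrix (Fin p) (Fin p) ℝ := fun t => 1 - η t • H t with hA
  have key : ∀ t, tstar + 1 ≤ t → t ≤ T →
      HasDerivAt (fun ε => θ t ε)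
        (η tstar • (backProd A (tstar + 1) t).mulVec gstar) 0 := by
    intro t ht1
    induction t, ht1 using Nat.le_induction with
    | base =>
      intro _
      have heq : (fun ε => θ (tstar + 1) ε)
          = fun ε : ℝ => (θinit - η tstar • g) + ε • (η tstar • gstar) := by
        funext ε; rw [hθ0]; module
      rw [heq, backProd_self]
      have h1 : HasDerivAt (fun ε : ℝ => ε • (η tstar • gstar))
          ((1 : ℝ) • (η tstar • gstar)) 0 := (hasDerivAt_id (0:ℝ)).smul_const _
      have := h1.const_add (θinit - η tstar • g)
      simpa [Matrix.one_mulVec] using this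
    | succ t ht IH =>
      intro htT'
      have htle : t ≤ T := by omega
      have htlt : t < T := by omega
      have hv := IH htle
      have hcomp := (hG t ht htlt).comp_hasDerivAt 0 hv
      have heq : (fun ε => θ (t + 1) ε)
          = fun ε => θ t ε - η t • G t (θ t ε) := by
        funext ε; exact hθ t ht htlt ε
      rw [heq]
      have hfinal := hv.sub (hcomp.const_smul (η t))
      convert hfinal using 1
      case e'_4 | e'_5 | e'_6 | e'_8 => rfl
      rw [backProd_succ A (tstar + 1) t (by omega)]
      show η tstar • ((A t * backProd A (tstar + 1) t).mulVec gstar) = _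
      rw [← Matrix.mulVec_mulVec, hA]
      simp only [Matrix.sub_mulVec, Matrix.one_mulVec, Matrix.smul_mulVec,
        LinearMap.coe_toContinuousLinearMap', Matrix.mulVecLin_apply, smul_sub,
        Matrix.mulVec_smul]
      rw [smul_comm (η tstar) (η t)]
  have hvT := key T (by omega) le_rfl
  have hfin := hL.comp_hasDerivAt 0 hvT
  convert hfin using 1
  case e'_4 | e'_5 | e'_8 => rfl
  simp only [ContinuousLinearMap.sum_apply, ContinuousLinearMap.smul_apply,
    ContinuousLinearMap.proj_apply, Pi.smul_apply, smul_eq_mul, Finset.mul_sum]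
  exact Finset.sum_congr rfl fun i _ => by ring

end
end
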